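/- arXiv:1512.05727 — 2 statements merged into one kernel-verified Lean document; each statement's English description precedes it below -/
import Mathlib

section
/- Let n ≥ 2 be a natural number. The alternating group A_n has no complex irreducible representation of degree 2. -/
/-!
In a two-dimensional representation `ρ`, an involution `g` whose conjugacy class also contains
an element `h` and the product `g * h` (as in a Klein four-group permuted by an element of
order three) has `det (ρ g) = 1`; a `2 × 2` involution of determinant one is a scalar, hence
central, so `ρ g = ρ (g * h) = ρ g * ρ h = ρ g ^ 2 = 1`. In `A_n` this applies to every double
transposition, and these generate a subgroup containing the commutator subgroup (the Klein
four-group for `n = 4`, all of `A_n` for `n ≥ 5`, and `A_n` is abelian for `n ≤ 3`).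
So every two-dimensional representation of `A_n` has commuting image, and by Schur's lemma
an irreducible one is one-dimensional.
-/

open CategoryTheory Equiv Equiv.Perm Module
open scoped commutatorElement

theorem Matrix.eq_algebraMap_of_mul_self_eq_one_of_det_eq_one {k : Type*} [Field k]
    [NeZero (2 : k)] {A : Matrix (Fin 2) (Fin 2) k} (hA : A * A = 1) (hdet : A.det = 1) :
    A = algebraMap k _ (A 0 0) := by
  have hadj : A.adjugate = A :=
    calc A.adjugate = A * A * A.adjugate := by rw [hA, one_mul]
      _ = A := by rw [mul_assoc, mul_adjugate, hdet, one_smul, mul_one]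
  have eq_zero_of_neg_eq {a : k} (h : -a = a) : a = 0 :=
    (mul_eq_zero.1 ((two_mul a).trans (neg_eq_iff_add_eq_zero.1 h))).resolve_left two_ne_zero
  rw [adjugate_fin_two] at hadj
  have h00 : A 1 1 = A 0 0 := congrFun (congrFun hadj 0) 0
  have h01 : A 0 1 = 0 := eq_zero_of_neg_eq (congrFun (congrFun hadj 0) 1)
  have h10 : A 1 0 = 0 := eq_zero_of_neg_eq (congrFun (congrFun hadj 1) 0)
  ext i j
  fin_cases i <;> fin_cases j <;> simp [algebraMap_matrix_apply, h00, h01, h10]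

theorem LinearMap.exists_eq_algebraMap_of_mul_self_eq_one_of_det_eq_one {k V : Type*} [Field k]
    [NeZero (2 : k)] [AddCommGroup V] [Module k V] (hV : finrank k V = 2) {f : Module.End k V}
    (hf : f * f = 1) (hdet : f.det = 1) : ∃ c : k, f = algebraMap k _ c := by
  have := Module.finite_of_finrank_eq_succ hV
  let b := Module.finBasisOfFinrankEq k V hV
  refine ⟨toMatrix b b f 0 0, (toMatrix b b).injective ?_⟩
  rw [toMatrix_algebraMap]
  exact Matrix.eq_algebraMap_of_mul_self_eq_one_of_det_eq_one
    (by rw [← toMatrix_mul, hf, toMatrix_one]) (by rw [det_toMatrix, hdet])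

theorem MonoidHom.map_eq_one_of_isConj_of_isConj_mul {G M : Type*} [Group G] [Monoid M]
    (f : G →* M) {g h : G} (hg : g * g = 1) (hgh : IsConj g h) (hgmul : IsConj g (g * h))
    (hcenter : f g ∈ Set.center M) : f g = 1 :=
  calc f g = f (g * h) := (f.map_isConj hgmul).eq_of_left_mem_center hcenter
    _ = f g * f g := by rw [map_mul, ← (f.map_isConj hgh).eq_of_left_mem_center hcenter]
    _ = 1 := by rw [← map_mul, hg, map_one]

theorem Representation.eq_one_of_isConj_of_isConj_mul {k G V : Type*} [Field k] [NeZero (2 : k)]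
    [Group G] [AddCommGroup V] [Module k V] (ρ : Representation k G V) (hV : finrank k V = 2)
    {g h : G} (hg : g * g = 1) (hgh : IsConj g h) (hgmul : IsConj g (g * h)) : ρ g = 1 := by
  have hdet : (LinearMap.det.comp ρ) g = 1 :=
    MonoidHom.map_eq_one_of_isConj_of_isConj_mul _ hg hgh hgmul (by simp [Set.center_eq_univ])
  obtain ⟨c, hc⟩ := LinearMap.exists_eq_algebraMap_of_mul_self_eq_one_of_det_eq_one hV
    (f := ρ g) (by rw [← map_mul, hg, map_one]) hdet
  exact ρ.map_eq_one_of_isConj_of_isConj_mul hg hgh hgmul (hc ▸ Set.algebraMap_mem_center c)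

theorem MonoidHom.commute_of_commutator_le_ker {G M : Type*} [Group G] [Monoid M]
    (f : G →* M) (hf : commutator G ≤ f.ker) (g h : G) : Commute (f g) (f h) := by
  have hgh : f ⁅g, h⁆ = 1 :=
    hf (Subgroup.commutator_mem_commutator (Subgroup.mem_top g) (Subgroup.mem_top h))
  calc f g * f h = f (⁅g, h⁆ * (h * g)) := by rw [← map_mul, commutatorElement_def]; group
    _ = f h * f g := by rw [map_mul, hgh, one_mul, map_mul]

theorem Equiv.Perm.mul_swap_mul_swap_mul_inv {α : Type*} [DecidableEq α] (σ : Perm α)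
    (a b c d : α) :
    σ * (swap a b * swap c d) * σ⁻¹ = swap (σ a) (σ b) * swap (σ c) (σ d) := by
  rw [swap_apply_apply, swap_apply_apply]
  group

theorem Equiv.swap_mul_swap_mul_swap_mul_swap {α : Type*} [DecidableEq α] {a b c d : α}
    (h : [a, b, c, d].Nodup) :
    swap a b * swap c d * (swap a c * swap d b) = swap a d * swap b c := by
  simp only [List.nodup_cons, List.mem_cons, List.not_mem_nil, or_false, not_or] at h
  obtain ⟨⟨hab, hac, had⟩, ⟨hbc, hbd⟩, hcd, -⟩ := h
  ext i
  by_cases ha : i = a; · simp [swap_apply_of_ne_of_ne, *, Ne.symm]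
  by_cases hb : i = b; · simp [swap_apply_of_ne_of_ne, *, Ne.symm]
  by_cases hc : i = c; · simp [swap_apply_of_ne_of_ne, *, Ne.symm]
  by_cases hd : i = d; · simp [swap_apply_of_ne_of_ne, *, Ne.symm]
  simp [swap_apply_of_ne_of_ne, *]

theorem Equiv.Perm.exists_eq_swap_mul_swap_of_cycleType_eq_two_two {α : Type*} [Fintype α]
    [DecidableEq α] {g : Perm α} (hg : g.cycleType = {2, 2}) :
    ∃ a b c d : α, [a, b, c, d].Nodup ∧ g = swap a b * swap c d := by
  have h4 : Fintype.card (Fin 4) ≤ Fintype.card α := by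
    simpa [← sum_cycleType, hg] using g.support.card_le_univ
  obtain ⟨e⟩ := Function.Embedding.nonempty_of_card_le h4
  have he : [e 0, e 1, e 2, e 3].Nodup := by simp
  obtain ⟨σ, hσ⟩ := isConj_iff.1 (isConj_iff_cycleType_eq.2
    ((cycleType_swap_mul_swap_of_nodup he).trans hg.symm))
  refine ⟨σ (e 0), σ (e 1), σ (e 2), σ (e 3), by simp, ?_⟩
  rw [← hσ, mul_swap_mul_swap_mul_inv]

namespace alternatingGroup

variable {α : Type*} [Fintype α] [DecidableEq α]

theorem swap_mul_swap_mem {a b c d : α} (hab : a ≠ b) (hcd : c ≠ d) :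
    swap a b * swap c d ∈ alternatingGroup α := by
  simp [mem_alternatingGroup, sign_swap hab, sign_swap hcd]

theorem map_eq_one_of_coe_eq_swap_mul_swap {k V : Type*} [Field k] [NeZero (2 : k)]
    [AddCommGroup V] [Module k V] (ρ : Representation k (alternatingGroup α) V)
    (hV : finrank k V = 2) {g : alternatingGroup α} {a b c d : α} (habcd : [a, b, c, d].Nodup)
    (hg : (g : Perm α) = swap a b * swap c d) : ρ g = 1 := by
  obtain ⟨hab, hac, had, hbc, hbd, hcd⟩ :
      a ≠ b ∧ a ≠ c ∧ a ≠ d ∧ b ≠ c ∧ b ≠ d ∧ c ≠ d := by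
    simpa [and_assoc] using habcd
  let h : alternatingGroup α := ⟨swap a c * swap d b, swap_mul_swap_mem hac hbd.symm⟩
  -- conjugation by the 3-cycle `(b c d)` permutes `g`, `h` and `g * h` cyclically
  let x : alternatingGroup α := ⟨swap b c * swap c d, swap_mul_swap_mem hbc hcd⟩
  have hx : (x : Perm α) a = a ∧ (x : Perm α) b = c ∧ (x : Perm α) c = d ∧
      (x : Perm α) d = b := by
    simp [x, swap_apply_of_ne_of_ne, *, Ne.symm]
  have hxg : x * g * x⁻¹ = h := by
    ext1
    simp only [Subgroup.coe_mul, Subgroup.coe_inv, hg, mul_swap_mul_swap_mul_inv, hx, h]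
  have hxh : x * h * x⁻¹ = g * h := by
    ext1
    simp only [Subgroup.coe_mul, Subgroup.coe_inv, hg, mul_swap_mul_swap_mul_inv, hx, h,
      swap_mul_swap_mul_swap_mul_swap habcd]
  have hgg : g * g = 1 := by
    ext1
    rw [Subgroup.coe_mul, hg, (disjoint_swap_swap habcd).commute.symm.mul_mul_mul_comm,
      swap_mul_self, swap_mul_self, one_mul, OneMemClass.coe_one]
  have hgh : IsConj g h := isConj_iff.2 ⟨x, hxg⟩
  exact ρ.eq_one_of_isConj_of_isConj_mul hV hgg hgh (hgh.trans (isConj_iff.2 ⟨x, hxh⟩))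

theorem kleinFour_le_ker {k V : Type*} [Field k] [NeZero (2 : k)] [AddCommGroup V] [Module k V]
    (ρ : Representation k (alternatingGroup α) V) (hV : finrank k V = 2) :
    kleinFour α ≤ ρ.ker := by
  rw [kleinFour, Subgroup.closure_le]
  intro g hg
  obtain ⟨a, b, c, d, habcd, hg⟩ := exists_eq_swap_mul_swap_of_cycleType_eq_two_two hg
  exact map_eq_one_of_coe_eq_swap_mul_swap ρ hV habcd hg

theorem commutator_le_kleinFour : commutator (alternatingGroup α) ≤ kleinFour α := by
  rcases le_or_gt (Nat.card α) 3 with h3 | h4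
  · have := isMulCommutative_of_card_le_three h3
    rw [commutator_eq_bot]
    exact bot_le
  rcases (Nat.succ_le_of_lt h4).eq_or_lt with h4 | h5
  · exact (kleinFour_eq_commutator h4.symm).ge
  · rw [kleinFour, closure_cycleType_eq_two_two_eq_top h5]
    exact le_top

end alternatingGroup

namespace FDRep

variable {k G : Type*} [Field k] [Monoid G]

def homOfCommute (V : FDRep k G) (f : Module.End k V) (hf : ∀ g, Commute f (V.ρ g)) : V ⟶ V :=
  ⟨InducedCategory.homMk (ModuleCat.ofHom f), fun g => by
    ext1
    ext v
    exact LinearMap.congr_fun (hf g) v⟩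

theorem exists_eq_algebraMap_of_commute [IsAlgClosed k] (V : FDRep k G) [Simple V]
    (f : Module.End k V) (hf : ∀ g, Commute f (V.ρ g)) : ∃ c : k, f = algebraMap k _ c := by
  have hV : finrank k (V ⟶ V) = 1 := by
    rw [finrank_hom_simple_simple, if_pos ⟨Iso.refl V⟩]
  obtain ⟨c, hc⟩ :=
    (finrank_eq_one_iff_of_nonzero' (𝟙 V) (id_nonzero V)).1 hV (homOfCommute V f hf)
  exact ⟨c, LinearMap.ext fun v => (congrArg (fun φ : V ⟶ V => φ.hom v) hc).symm⟩

theorem finrank_eq_one_of_commute [IsAlgClosed k] (V : FDRep k G) [Simple V]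
    (h : ∀ g g', Commute (V.ρ g) (V.ρ g')) : finrank k V = 1 := by
  have hscalar (f : Module.End k V) : ∃ c : k, f = algebraMap k _ c := by
    refine exists_eq_algebraMap_of_commute V f fun g => ?_
    obtain ⟨c, hc⟩ := exists_eq_algebraMap_of_commute V _ (h g)
    rw [hc]
    exact (Algebra.commutes c f).symm
  have hle : finrank k (Module.End k V) ≤ 1 := by
    simpa using LinearMap.finrank_le_finrank_of_surjective
      (f := Algebra.linearMap k (Module.End k V)) fun f => (hscalar f).imp fun _ hc => hc.symm
  have hpos : 0 < finrank k V := by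
    rw [finrank_pos_iff, ← not_subsingleton_iff_nontrivial]
    intro hV
    apply id_nonzero V
    ext v
    exact Subsingleton.elim _ _
  rw [finrank_linearMap] at hle
  nlinarith

end FDRep

theorem alternatingGroup_no_irrep_of_degree_two_general
    (n : ℕ)
    (V : FDRep ℂ (alternatingGroup (Fin n)))
    (hV : CategoryTheory.Simple V) :
    Module.finrank ℂ V ≠ 2 := by
  intro h2
  have hker : commutator (alternatingGroup (Fin n)) ≤ V.ρ.ker :=
    alternatingGroup.commutator_le_kleinFour.trans (alternatingGroup.kleinFour_le_ker V.ρ h2)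
  have h1 := FDRep.finrank_eq_one_of_commute V (V.ρ.commute_of_commutator_le_ker hker)
  omega

/-- For `n ≥ 2`, the alternating group `A_n` has no complex irreducible
representation of degree 2. -/
theorem alternatingGroup_no_irrep_of_degree_two
    (n : ℕ) (hn : 2 ≤ n)
    (V : FDRep ℂ (alternatingGroup (Fin n)))
    (hV : CategoryTheory.Simple V) :
    Module.finrank ℂ V ≠ 2 :=
  alternatingGroup_no_irrep_of_degree_two_general n V hV
end

section
/- Let p be an odd prime and let Γ = S_{p-1} act on the cyclic group C_p = ⟨z⟩ ⊂ S_p (z = (1 2 ... p)) via the action ◁' arising from the exact factorization S_p = C_p·S_{p-1} (determined by c·s = (c ▷' s)(c ◁' s) for c ∈ C_p, s ∈ S_{p-1}). Then C_p has no nontrivial fixed points under this action: if z^i ◁' s = z^i for all s ∈ S_{p-1}, then i ≡ 0 mod p. -/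
/-!
If `z^i s = t z^i` with `s, t` fixing the last letter `a`, then `s` fixes `z^{-i} a`; so the
stabilizer of `a` in `S_p` is contained in that of `z^{-i} a`. For at least three letters a
transposition separates the stabilizers of two distinct points, hence `z^i` fixes `a`, and a
power of the `p`-cycle `z` with a fixed point is trivial, so `p ∣ i`.
-/

open Equiv MulAction

theorem MulAction.stabilizer_le_stabilizer_inv_smul {G α : Type*} [Group G] [MulAction G α]
    {g : G} {a : α} (h : ∀ s ∈ stabilizer G a, ∃ t ∈ stabilizer G a, g * s = t * g) :
    stabilizer G a ≤ stabilizer G (g⁻¹ • a) := by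
  intro s hs
  obtain ⟨t, ht, hgs⟩ := h s hs
  rw [mem_stabilizer_iff] at ht ⊢
  rw [eq_inv_smul_iff, smul_smul, hgs, mul_smul, smul_inv_smul, ht]

theorem Equiv.Perm.eq_of_stabilizer_le {α : Type*} (hα : 3 ≤ ENat.card α) {a b : α}
    (h : stabilizer (Perm α) a ≤ stabilizer (Perm α) b) : b = a := by
  classical
  by_contra hba
  obtain ⟨c, hca, hcb⟩ := ENat.exists_ne_ne_of_three_le hα a b
  have hswap : swap b c ∈ stabilizer (Perm α) a :=
    swap_apply_of_ne_of_ne (Ne.symm hba) (Ne.symm hca)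
  exact hcb (by simpa using h hswap)

theorem finRotate_pow_apply_eq_self_iff {n : ℕ} (hn : 2 ≤ n) {i : ℕ} {x : Fin n} :
    (finRotate n ^ i) x = x ↔ n ∣ i := by
  have hcycle := isCycle_finRotate_of_le hn
  have hx : finRotate n x ≠ x := by
    rw [← Perm.mem_support, support_finRotate_of_le hn]
    exact Finset.mem_univ x
  rw [← hcycle.pow_eq_one_iff' hx, ← orderOf_dvd_iff_pow_eq_one, hcycle.orderOf,
    support_finRotate_of_le hn, Finset.card_univ, Fintype.card_fin]

/-- Let `p` be an odd prime, `z = (1 2 ... p)` (i.e. `finRotate p`),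
`C_p = ⟨z⟩` and `Γ = S_{p-1}` the stabilizer of the last letter, giving the
exact factorization `S_p = C_p · Γ`. Consider the action `◁'` of `Γ` on `C_p`
determined by `c s = (c ▷' s)(c ◁' s)` with `c ▷' s ∈ Γ` and `c ◁' s ∈ C_p`.
Then `C_p` has no nontrivial fixed points under this action: if `z^i ◁' s = z^i`
for all `s ∈ Γ` (i.e. for every `s ∈ Γ` there is `t ∈ Γ` with
`z^i s = t z^i`), then `i ≡ 0 (mod p)`. -/
theorem cyclic_no_nontrivial_fixed_points
    (p : ℕ) (hp : p.Prime) (hodd : Odd p) (i : ℕ)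
    (h : ∀ s ∈ MulAction.stabilizer (Equiv.Perm (Fin p))
        (⟨p - 1, Nat.sub_lt hp.pos Nat.one_pos⟩ : Fin p),
      ∃ t ∈ MulAction.stabilizer (Equiv.Perm (Fin p))
        (⟨p - 1, Nat.sub_lt hp.pos Nat.one_pos⟩ : Fin p),
        (finRotate p) ^ i * s = t * (finRotate p) ^ i) :
    p ∣ i := by
  have hp3 : 3 ≤ p := by
    have := hp.two_le
    have := Nat.odd_iff.mp hodd
    omega
  have hfix := Perm.eq_of_stabilizer_le (by simpa using hp3) (stabilizer_le_stabilizer_inv_smul h)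
  rw [Perm.smul_def, Perm.inv_eq_iff_eq] at hfix
  exact (finRotate_pow_apply_eq_self_iff hp.two_le).1 hfix.symm
end
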